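/- arXiv:1412.8241 — 3 statements merged into one kernel-verified Lean document; each statement's English description precedes it below -/
import Mathlib

section
/- Fix R > 0. There exists a constant C₁ = C₁(N, R, s) > 0 such that ∫_{B_R} ( ∫_{B_{2R} \ B_R} (|x| − R)² / |x − y|^{N+2s} dx ) dy ≤ C₁; in particular this double integral is finite for every s ∈ (0,1). -/
/-!
On the annulus `R ≤ |x| < 2R` and for `|y| < R` the numerator is controlled by the distance:
`0 ≤ |x| - R ≤ |x| - |y| ≤ |x - y|`, so the integrand is at most `|x - y|^(2 - N - 2s)`.
Since `x - y` stays in `B_{3R}`, the inner integral is bounded, uniformly in `y`, by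
`∫_{B_{3R}} |z|^(2 - N - 2s) dz`, which is finite because `2 - N - 2s > -N` exactly when `s < 1`.
-/

open MeasureTheory Filter Topology ENNReal

noncomputable section

abbrev Euc (N : ℕ) := EuclideanSpace ℝ (Fin N)

/-- Squared Gagliardo seminorm `[u]²` as an extended nonnegative real. -/
def gagliardoSq (N : ℕ) (s : ℝ) (u : Euc N → ℝ) : ℝ≥0∞ :=
  ∫⁻ x : Euc N, ∫⁻ y : Euc N, ENNReal.ofReal (|u x - u y| ^ 2 / ‖x - y‖ ^ ((N : ℝ) + 2 * s))

/-- Gagliardo seminorm `[u]`. -/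
def gagliardoNorm (N : ℕ) (s : ℝ) (u : Euc N → ℝ) : ℝ :=
  Real.sqrt (gagliardoSq N s u).toReal

/-- Membership in `X^s_0(Ω)`. -/
def memX (N : ℕ) (s : ℝ) (Ω : Set (Euc N)) (u : Euc N → ℝ) : Prop :=
  MemLp u 2 (volume : Measure (Euc N)) ∧ gagliardoSq N s u < ⊤ ∧
    ∀ᵐ x : Euc N, x ∉ Ω → u x = 0

/-- The `L^∞(Ω)` norm as an extended nonnegative real. -/
def linfty (N : ℕ) (Ω : Set (Euc N)) (u : Euc N → ℝ) : ℝ≥0∞ :=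
  eLpNorm u ⊤ ((volume : Measure (Euc N)).restrict Ω)

/-- `u` is a weak solution of `(−Δ)^s u = h(u)` in `Ω`, `u = 0` outside `Ω`. -/
def isWeakSolution (N : ℕ) (s : ℝ) (Ω : Set (Euc N)) (h : ℝ → ℝ) (u : Euc N → ℝ) : Prop :=
  memX N s Ω u ∧
  ∀ φ : Euc N → ℝ, memX N s Ω φ →
    Integrable (fun p : Euc N × Euc N =>
        (u p.1 - u p.2) * (φ p.1 - φ p.2) / ‖p.1 - p.2‖ ^ ((N : ℝ) + 2 * s))
      ((volume : Measure (Euc N)).prod volume) ∧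
    IntegrableOn (fun x => h (u x) * φ x) Ω volume ∧
    (∫ p : Euc N × Euc N,
        (u p.1 - u p.2) * (φ p.1 - φ p.2) / ‖p.1 - p.2‖ ^ ((N : ℝ) + 2 * s)
        ∂((volume : Measure (Euc N)).prod volume))
      = ∫ x in Ω, h (u x) * φ x

/-- `F(t) = ∫₀^t f`. -/
def primitive (f : ℝ → ℝ) (t : ℝ) : ℝ := ∫ τ in (0:ℝ)..t, f τ

open Metric Module

lemma ENNReal.exists_pos_le_ofReal_of_lt_top {a : ℝ≥0∞} (ha : a < ⊤) :
    ∃ C : ℝ, 0 < C ∧ a ≤ ENNReal.ofReal C :=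
  ⟨a.toReal + 1, by positivity, by
    rw [← ENNReal.ofReal_toReal ha.ne]
    exact ENNReal.ofReal_le_ofReal (by simp)⟩

section NormedGroup

variable {E : Type*} [NormedAddCommGroup E]

lemma sq_sub_div_norm_sub_rpow_le {x y : E} {R p : ℝ} (hx : R ≤ ‖x‖) (hy : ‖y‖ < R) :
    (‖x‖ - R) ^ 2 / ‖x - y‖ ^ p ≤ ‖x - y‖ ^ (2 - p) := by
  have hdist : ‖x‖ - ‖y‖ ≤ ‖x - y‖ := norm_sub_norm_le x y
  have hpos : 0 < ‖x - y‖ := by linarith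
  calc (‖x‖ - R) ^ 2 / ‖x - y‖ ^ p ≤ ‖x - y‖ ^ 2 / ‖x - y‖ ^ p := by
        gcongr
        linarith
    _ = ‖x - y‖ ^ (2 - p) := by rw [Real.rpow_sub hpos, Real.rpow_two]

end NormedGroup

section Lebesgue

variable {E : Type*} [NormedAddCommGroup E] [MeasurableSpace E] [BorelSpace E]
  {μ : Measure E} [μ.IsAddRightInvariant]

lemma setLIntegral_norm_sub_rpow_le {s : Set E} {y : E} {r β : ℝ}
    (hs : ∀ x ∈ s, ‖x - y‖ < r) :
    ∫⁻ x in s, ENNReal.ofReal (‖x - y‖ ^ β) ∂μ ≤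
      ∫⁻ z in ball 0 r, ENNReal.ofReal (‖z‖ ^ β) ∂μ := by
  set g : E → ℝ≥0∞ := (ball 0 r).indicator fun z => ENNReal.ofReal (‖z‖ ^ β) with hg_def
  have hg : Measurable g :=
    (by fun_prop : Measurable fun z : E => ENNReal.ofReal (‖z‖ ^ β)).indicator measurableSet_ball
  calc ∫⁻ x in s, ENNReal.ofReal (‖x - y‖ ^ β) ∂μ ≤ ∫⁻ x in s, g (x - y) ∂μ :=
        setLIntegral_mono (hg.comp (measurable_sub_const y)) fun x hx => by
          rw [hg_def, Set.indicator_of_mem (mem_ball_zero_iff.2 (hs x hx))]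
    _ ≤ ∫⁻ x, g (x - y) ∂μ := setLIntegral_le_lintegral _ _
    _ = ∫⁻ z, g z ∂μ := lintegral_sub_right_eq_self g y
    _ = ∫⁻ z in ball 0 r, ENNReal.ofReal (‖z‖ ^ β) ∂μ := lintegral_indicator measurableSet_ball _

lemma setLIntegral_annulus_le_setLIntegral_ball {y : E} {R p : ℝ} (hy : ‖y‖ < R) :
    ∫⁻ x in ball 0 (2 * R) \ ball 0 R, ENNReal.ofReal ((‖x‖ - R) ^ 2 / ‖x - y‖ ^ p) ∂μ ≤
      ∫⁻ z in ball 0 (3 * R), ENNReal.ofReal (‖z‖ ^ (2 - p)) ∂μ := by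
  have hannulus : MeasurableSet (ball (0 : E) (2 * R) \ ball 0 R) :=
    measurableSet_ball.diff measurableSet_ball
  refine (setLIntegral_mono' hannulus fun x hx => ENNReal.ofReal_le_ofReal
    (sq_sub_div_norm_sub_rpow_le (not_lt.1 (mt mem_ball_zero_iff.2 hx.2)) hy)).trans ?_
  refine setLIntegral_norm_sub_rpow_le fun x hx => ?_
  have hx2 : ‖x‖ < 2 * R := mem_ball_zero_iff.1 hx.1
  linarith [norm_sub_le x y]

end Lebesgue

section HaarMeasure

variable {E : Type*} [NormedAddCommGroup E] [NormedSpace ℝ E] [FiniteDimensional ℝ E]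
  [MeasurableSpace E] [BorelSpace E] {μ : Measure E} [μ.IsAddHaarMeasure]

lemma setLIntegral_ball_norm_rpow_lt_top (hd : 1 ≤ finrank ℝ E) {β : ℝ}
    (hβ : -(finrank ℝ E : ℝ) < β) (r : ℝ) :
    ∫⁻ x in ball 0 r, ENNReal.ofReal (‖x‖ ^ β) ∂μ < ⊤ := by
  have hdecay : ∀ᵐ x ∂μ.restrict (ball 0 r), ‖‖x‖ ^ β‖ ≤ 1 * ‖x‖ ^ (-(-β)) :=
    ae_of_all _ fun x => by
      rw [neg_neg, one_mul, Real.norm_of_nonneg (Real.rpow_nonneg (norm_nonneg x) β)]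
  exact (integrableOn_ball_of_norm_le_rpow hd (by linarith) hdecay
    (measurable_norm.pow_const β).aestronglyMeasurable).lintegral_lt_top

end HaarMeasure

theorem statement10_general
    (N : ℕ) (s R : ℝ) (hN : 0 < N) (hs1 : s < 1) :
    ∃ C₁ : ℝ, 0 < C₁ ∧
      (∫⁻ y in Metric.ball (0 : Euc N) R,
        ∫⁻ x in Metric.ball (0 : Euc N) (2 * R) \ Metric.ball (0 : Euc N) R,
          ENNReal.ofReal ((‖x‖ - R) ^ 2 / ‖x - y‖ ^ ((N : ℝ) + 2 * s)))
        ≤ ENNReal.ofReal C₁ := by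
  set I := ∫⁻ z in ball (0 : Euc N) (3 * R), ENNReal.ofReal (‖z‖ ^ (2 - ((N : ℝ) + 2 * s)))
  have hI : I < ⊤ :=
    setLIntegral_ball_norm_rpow_lt_top (by rw [finrank_euclideanSpace_fin]; omega)
      (by rw [finrank_euclideanSpace_fin]; linarith) _
  refine ENNReal.exists_pos_le_ofReal_of_lt_top ?_
  calc _ ≤ ∫⁻ _ in ball (0 : Euc N) R, I :=
        setLIntegral_mono' measurableSet_ball fun y hy =>
          setLIntegral_annulus_le_setLIntegral_ball (mem_ball_zero_iff.1 hy)
    _ = I * volume (ball (0 : Euc N) R) := setLIntegral_const _ _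
    _ < ⊤ := mul_lt_top hI measure_ball_lt_top

/-- Estimate `I` in Lemma 3.1:
`∫_{B_R} ∫_{B_{2R}∖B_R} (|x|−R)²/|x−y|^{N+2s} dx dy ≤ C₁(N,R,s)`. -/
theorem statement10
    (N : ℕ) (s R : ℝ) (hN : 0 < N) (hs0 : 0 < s) (hs1 : s < 1) (hR : 0 < R) :
    ∃ C₁ : ℝ, 0 < C₁ ∧
      (∫⁻ y in Metric.ball (0 : Euc N) R,
        ∫⁻ x in Metric.ball (0 : Euc N) (2 * R) \ Metric.ball (0 : Euc N) R,
          ENNReal.ofReal ((‖x‖ - R) ^ 2 / ‖x - y‖ ^ ((N : ℝ) + 2 * s)))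
        ≤ ENNReal.ofReal C₁ :=
  statement10_general N s R hN hs1
end
end

section
/- Let α, β, a be real numbers with 0 < α < 1 < α + β and 0 < a < 1, and define f : [0,∞) → ℝ by f(0) = 0 and f(t) = t^α (a + sin(1/t^β)) for t > 0. Then f is continuous on [0,∞), and with F(t) = ∫₀^t f(τ) dτ one has: −∞ < liminf_{t→0⁺} F(t)/t², limsup_{t→0⁺} F(t)/t² = +∞, and liminf_{t→0⁺} f(t)/t < 0; that is, f satisfies condition (f₀). -/
open MeasureTheory Filter Topology ENNReal

noncomputable section

/-!
Integrating by parts against the antiderivative `τ ^ (α + β + 1) cos (1 / τ ^ β) / β` shows that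
the oscillating part `∫₀ᵗ τ ^ α sin (1 / τ ^ β) dτ` is `O(t ^ (α + β + 1))`. Hence
`F t = a t ^ (α + 1) / (α + 1) + o(t ^ (α + 1))`, and `F t / t ^ 2` behaves like
`a t ^ (α - 1) / (α + 1) → +∞` because `α < 1`. At the points where `sin (1 / t ^ β) = -1`, which
accumulate at `0`, one has `f t / t = (a - 1) t ^ (α - 1) ≤ a - 1 < 0`.
-/

section

open Real Set

def rpowOsc (p q : ℝ) (g : ℝ → ℝ) (τ : ℝ) : ℝ :=
  if 0 < τ then τ ^ p * g (1 / τ ^ q) else 0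

variable {p q : ℝ} {g : ℝ → ℝ}

lemma rpowOsc_of_pos {τ : ℝ} (hτ : 0 < τ) : rpowOsc p q g τ = τ ^ p * g (1 / τ ^ q) :=
  if_pos hτ

lemma rpowOsc_of_nonpos {τ : ℝ} (hτ : τ ≤ 0) : rpowOsc p q g τ = 0 :=
  if_neg hτ.not_gt

lemma rpowOsc_add (h : ℝ → ℝ) (τ : ℝ) :
    rpowOsc p q (fun x => g x + h x) τ = rpowOsc p q g τ + rpowOsc p q h τ := by
  unfold rpowOsc
  split_ifs <;> ring

lemma abs_rpowOsc_le {C : ℝ} (hC : ∀ x, |g x| ≤ C) (τ : ℝ) :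
    |rpowOsc p q g τ| ≤ C * |τ| ^ p := by
  rcases le_or_gt τ 0 with hτ | hτ
  · rw [rpowOsc_of_nonpos hτ, abs_zero]
    exact mul_nonneg ((abs_nonneg _).trans (hC 0)) (rpow_nonneg (abs_nonneg τ) p)
  · rw [rpowOsc_of_pos hτ, abs_mul, abs_of_pos hτ, abs_of_pos (rpow_pos_of_pos hτ p), mul_comm]
    exact mul_le_mul_of_nonneg_right (hC _) (rpow_pos_of_pos hτ p).le

lemma continuous_rpowOsc (hp : 0 < p) (hg : Continuous g) {C : ℝ} (hC : ∀ x, |g x| ≤ C) :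
    Continuous (rpowOsc p q g) := by
  refine continuous_iff_continuousAt.2 fun x => ?_
  rcases lt_trichotomy x 0 with hx | rfl | hx
  · exact continuousAt_const.congr <|
      (eventually_lt_nhds hx).mono fun τ hτ => (rpowOsc_of_nonpos hτ.le).symm
  · have hbound : Tendsto (fun τ : ℝ => C * |τ| ^ p) (𝓝 0) (𝓝 0) := by
      have : Continuous (fun τ : ℝ => C * |τ| ^ p) :=
        continuous_const.mul (continuous_abs.rpow_const fun _ => Or.inr hp.le)
      simpa [zero_rpow hp.ne'] using this.tendsto 0
    rw [ContinuousAt, rpowOsc_of_nonpos le_rfl]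
    exact squeeze_zero_norm (abs_rpowOsc_le hC) hbound
  · have : ContinuousAt (fun τ => τ ^ p * g (1 / τ ^ q)) x :=
      (continuousAt_rpow_const x p (Or.inl hx.ne')).mul <| hg.continuousAt.comp <|
        continuousAt_const.div (continuousAt_rpow_const x q (Or.inl hx.ne'))
          (rpow_pos_of_pos hx q).ne'
    exact this.congr <| (eventually_gt_nhds hx).mono fun τ hτ => (rpowOsc_of_pos hτ).symm

lemma integral_rpowOsc_const (hp : -1 < p) (c : ℝ) {t : ℝ} (ht : 0 ≤ t) :
    ∫ τ in 0..t, rpowOsc p q (fun _ => c) τ = c * t ^ (p + 1) / (p + 1) := by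
  have hcongr : ∀ τ ∈ uIoc 0 t, rpowOsc p q (fun _ => c) τ = c * τ ^ p := by
    intro τ hτ
    rw [uIoc_of_le ht] at hτ
    rw [rpowOsc_of_pos hτ.1, mul_comm]
  rw [intervalIntegral.integral_congr_ae (ae_of_all volume hcongr),
    intervalIntegral.integral_const_mul, integral_rpow (Or.inl hp),
    zero_rpow (by linarith : p + 1 ≠ 0)]
  ring

lemma abs_integral_rpowOsc_le (hp : -1 < p) {C : ℝ} (hC : ∀ x, |g x| ≤ C) {t : ℝ}
    (ht : 0 ≤ t) : |∫ τ in 0..t, rpowOsc p q g τ| ≤ C * t ^ (p + 1) / (p + 1) := by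
  have hle : ∀ τ ∈ Ioc 0 t, ‖rpowOsc p q g τ‖ ≤ C * τ ^ p := fun τ hτ => by
    simpa [abs_of_pos hτ.1] using abs_rpowOsc_le (q := q) hC τ
  have := intervalIntegral.norm_integral_le_of_norm_le (μ := volume) ht (ae_of_all _ hle)
    ((intervalIntegral.intervalIntegrable_rpow' hp).const_mul C)
  rwa [intervalIntegral.integral_const_mul, integral_rpow (Or.inl hp),
    zero_rpow (by linarith : p + 1 ≠ 0), sub_zero, ← mul_div_assoc] at this

lemma hasDerivAt_rpow_mul_cos_one_div_rpow (r q : ℝ) {τ : ℝ} (hτ : 0 < τ) :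
    HasDerivAt (fun s => s ^ r * cos (1 / s ^ q))
      (r * τ ^ (r - 1) * cos (1 / τ ^ q) + q * τ ^ (r - q - 1) * sin (1 / τ ^ q)) τ := by
  have hinner : HasDerivAt (fun s => 1 / s ^ q) (-q * τ ^ (-q - 1)) τ :=
    (hasDerivAt_rpow_const (Or.inl hτ.ne')).congr_of_eventuallyEq <|
      (eventually_gt_nhds hτ).mono fun s hs => by simp only [rpow_neg hs.le, one_div]
  have hexp : τ ^ r * τ ^ (-q - 1) = τ ^ (r - q - 1) := by
    rw [← rpow_add hτ]
    ring_nf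
  refine ((hasDerivAt_rpow_const (Or.inl hτ.ne')).mul hinner.cos).congr_deriv ?_
  linear_combination (q * sin (1 / τ ^ q)) * hexp

variable {α β : ℝ}

lemma integral_rpowOsc_sin (hα : 0 < α) (hαβ : 0 < α + β) {t : ℝ} (ht : 0 < t) :
    β * ∫ τ in 0..t, rpowOsc α β sin τ =
      t ^ (α + β + 1) * cos (1 / t ^ β) - (α + β + 1) * ∫ τ in 0..t, rpowOsc (α + β) β cos τ := by
  have hsin := (continuous_rpowOsc (q := β) hα continuous_sin
    abs_sin_le_one).intervalIntegrable (μ := volume) 0 t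
  have hcos := (continuous_rpowOsc (q := β) hαβ continuous_cos
    abs_cos_le_one).intervalIntegrable (μ := volume) 0 t
  have hftc : ∫ τ in 0..t, ((α + β + 1) * rpowOsc (α + β) β cos τ + β * rpowOsc α β sin τ) =
      rpowOsc (α + β + 1) β cos t - rpowOsc (α + β + 1) β cos 0 := by
    refine intervalIntegral.integral_eq_sub_of_hasDerivAt_of_le ht.le
      (continuous_rpowOsc (by linarith) continuous_cos abs_cos_le_one).continuousOn
      (fun τ hτ => ?_) ((hcos.const_mul _).add (hsin.const_mul _))
    have h := hasDerivAt_rpow_mul_cos_one_div_rpow (α + β + 1) β hτ.1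
    rw [show α + β + 1 - 1 = α + β by ring, show α + β + 1 - β - 1 = α by ring] at h
    rw [rpowOsc_of_pos hτ.1, rpowOsc_of_pos hτ.1]
    refine (h.congr_of_eventuallyEq ?_).congr_deriv (by ring)
    exact (eventually_gt_nhds hτ.1).mono fun s hs => rpowOsc_of_pos hs
  rw [intervalIntegral.integral_add (hcos.const_mul _) (hsin.const_mul _),
    intervalIntegral.integral_const_mul, intervalIntegral.integral_const_mul,
    rpowOsc_of_pos ht, rpowOsc_of_nonpos le_rfl] at hftc
  linarith

lemma abs_integral_rpowOsc_sin_le (hα : 0 < α) (hβ : 0 < β) {t : ℝ} (ht : 0 < t) :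
    |∫ τ in 0..t, rpowOsc α β sin τ| ≤ 2 / β * t ^ (α + β + 1) := by
  have hr : 0 < α + β + 1 := by linarith
  have htr := rpow_pos_of_pos ht (α + β + 1)
  have hcos := abs_integral_rpowOsc_le (q := β) (by linarith : -1 < α + β) abs_cos_le_one ht.le
  have hboundary : |t ^ (α + β + 1) * cos (1 / t ^ β)| ≤ t ^ (α + β + 1) := by
    rw [abs_mul, abs_of_pos htr]
    exact mul_le_of_le_one_right htr.le (abs_cos_le_one _)
  have hβS : |β * ∫ τ in 0..t, rpowOsc α β sin τ| ≤ 2 * t ^ (α + β + 1) := by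
    rw [integral_rpowOsc_sin hα (by linarith) ht]
    calc _ ≤ |t ^ (α + β + 1) * cos (1 / t ^ β)|
          + |(α + β + 1) * ∫ τ in 0..t, rpowOsc (α + β) β cos τ| := abs_sub _ _
      _ ≤ t ^ (α + β + 1) + (α + β + 1) * (1 * t ^ (α + β + 1) / (α + β + 1)) := by
        rw [abs_mul (α + β + 1), abs_of_pos hr]
        gcongr
      _ = 2 * t ^ (α + β + 1) := by field_simp; ring
  rw [abs_mul, abs_of_pos hβ] at hβS
  rw [div_mul_eq_mul_div, le_div_iff₀' hβ]
  exact hβS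

lemma primitive_rpowOsc_add_sin (hα : 0 < α) (a : ℝ) {t : ℝ} (ht : 0 ≤ t) :
    primitive (rpowOsc α β fun x => a + sin x) t =
      a * t ^ (α + 1) / (α + 1) + ∫ τ in 0..t, rpowOsc α β sin τ := by
  have hconst := (continuous_rpowOsc (q := β) hα continuous_const
    (fun _ => le_refl |a|)).intervalIntegrable (μ := volume) 0 t
  have hsin := (continuous_rpowOsc (q := β) hα continuous_sin
    abs_sin_le_one).intervalIntegrable (μ := volume) 0 t
  unfold primitive
  simp_rw [rpowOsc_add]
  rw [intervalIntegral.integral_add hconst hsin, integral_rpowOsc_const (by linarith) a ht]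

lemma tendsto_primitive_rpowOsc_div_rpow (hα : 0 < α) (hβ : 0 < β) (a : ℝ) :
    Tendsto (fun t => primitive (rpowOsc α β fun x => a + sin x) t / t ^ (α + 1)) (𝓝[>] 0)
      (𝓝 (a / (α + 1))) := by
  have hbound : Tendsto (fun t : ℝ => 2 / β * t ^ β) (𝓝[>] 0) (𝓝 0) := by
    have := ((continuous_rpow_const hβ.le).tendsto 0).const_mul (2 / β)
    simpa [zero_rpow hβ.ne'] using this.mono_left nhdsWithin_le_nhds
  have hosc : Tendsto (fun t => (∫ τ in 0..t, rpowOsc α β sin τ) / t ^ (α + 1)) (𝓝[>] 0)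
      (𝓝 0) := by
    refine squeeze_zero_norm' ?_ hbound
    filter_upwards [self_mem_nhdsWithin] with t (ht : 0 < t)
    rw [norm_div, norm_of_nonneg (rpow_pos_of_pos ht _).le, div_le_iff₀ (rpow_pos_of_pos ht _),
      mul_assoc, ← rpow_add ht, show β + (α + 1) = α + β + 1 by ring]
    exact abs_integral_rpowOsc_sin_le hα hβ ht
  have := hosc.const_add (a / (α + 1))
  rw [add_zero] at this
  refine this.congr' ?_
  filter_upwards [self_mem_nhdsWithin] with t (ht : 0 < t)
  have := (rpow_pos_of_pos ht (α + 1)).ne'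
  have : α + 1 ≠ 0 := by linarith
  rw [primitive_rpowOsc_add_sin hα a ht.le]
  field_simp

lemma tendsto_primitive_rpowOsc_div_sq (hα0 : 0 < α) (hα1 : α < 1) (hβ : 0 < β) {a : ℝ}
    (ha : 0 < a) :
    Tendsto (fun t => primitive (rpowOsc α β fun x => a + sin x) t / t ^ 2) (𝓝[>] 0) atTop := by
  refine ((tendsto_rpow_neg_nhdsGT_zero (by linarith : α - 1 < 0)).atTop_mul_pos (by positivity)
    (tendsto_primitive_rpowOsc_div_rpow hα0 hβ a)).congr' ?_
  filter_upwards [self_mem_nhdsWithin] with t (ht : 0 < t)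
  have hsplit : t ^ (α + 1) = t ^ (α - 1) * t ^ 2 := by
    rw [← Real.rpow_two, ← rpow_add ht]
    ring_nf
  have := (rpow_pos_of_pos ht (α - 1)).ne'
  rw [hsplit]
  field_simp

lemma frequently_sin_one_div_rpow_eq_neg_one (hβ : 0 < β) :
    ∃ᶠ t in 𝓝[>] (0 : ℝ), sin (1 / t ^ β) = -1 := by
  have hx : Tendsto (fun n : ℕ => 3 * π / 2 + n * (2 * π)) atTop atTop :=
    tendsto_atTop_add_const_left _ _ (tendsto_natCast_atTop_atTop.atTop_mul_const (by positivity))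
  have hxpos : ∀ n : ℕ, 0 < 3 * π / 2 + n * (2 * π) := fun n => by positivity
  have hu : Tendsto (fun n : ℕ => (3 * π / 2 + n * (2 * π)) ^ (-(1 / β))) atTop (𝓝[>] 0) :=
    tendsto_nhdsWithin_iff.2 ⟨(tendsto_rpow_neg_atTop (by positivity)).comp hx,
      .of_forall fun n => rpow_pos_of_pos (hxpos n) _⟩
  refine hu.frequently (.of_forall fun n => ?_)
  rw [← rpow_mul (hxpos n).le, neg_mul, one_div_mul_cancel hβ.ne', Real.rpow_neg_one, one_div,
    inv_inv, show 3 * π / 2 + n * (2 * π) = π / 2 + π + n * (2 * π) by ring, sin_add_nat_mul_two_pi,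
    sin_add_pi, sin_pi_div_two]

lemma liminf_rpowOsc_div_lt_zero (hα : α < 1) (hβ : 0 < β) {a : ℝ} (ha : a < 1) :
    liminf (fun t => ((rpowOsc α β (fun x => a + sin x) t / t : ℝ) : EReal)) (𝓝[>] 0) < 0 := by
  have hfreq : ∃ᶠ t in 𝓝[>] (0 : ℝ),
      ((rpowOsc α β (fun x => a + sin x) t / t : ℝ) : EReal) ≤ ((a - 1 : ℝ) : EReal) := by
    refine ((frequently_sin_one_div_rpow_eq_neg_one hβ).and_eventually
      (Ioo_mem_nhdsGT one_pos)).mono ?_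
    rintro t ⟨hsin, ht0, ht1⟩
    have h1 : 1 ≤ t ^ (α - 1) := one_le_rpow_of_pos_of_le_one_of_nonpos ht0 ht1.le (by linarith)
    rw [EReal.coe_le_coe_iff, rpowOsc_of_pos ht0, hsin]
    calc t ^ α * (a + -1) / t = t ^ (α - 1) * (a - 1) := by rw [rpow_sub_one ht0.ne']; ring
      _ ≤ 1 * (a - 1) := mul_le_mul_of_nonpos_right h1 (by linarith)
      _ = a - 1 := one_mul _
  exact (liminf_le_of_frequently_le' hfreq).trans_lt (by exact_mod_cast (by linarith : a - 1 < 0))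

end

/-- Remark 1.2(1): `f(t) = t^α (a + sin(1/t^β))` (and `f(0)=0`) satisfies `(f₀)`. -/
theorem statement15
    (α β a : ℝ) (hα0 : 0 < α) (hα1 : α < 1) (hαβ : 1 < α + β) (ha0 : 0 < a) (ha1 : a < 1)
    (f : ℝ → ℝ)
    (hf : ∀ t : ℝ, f t = if 0 < t then t ^ α * (a + Real.sin (1 / t ^ β)) else 0) :
    ContinuousOn f (Set.Ici (0:ℝ)) ∧
    (⊥ : EReal) <
      liminf (fun t : ℝ => ((primitive f t / t ^ 2 : ℝ) : EReal)) (𝓝[>] (0:ℝ)) ∧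
    limsup (fun t : ℝ => ((primitive f t / t ^ 2 : ℝ) : EReal)) (𝓝[>] (0:ℝ)) = ⊤ ∧
    liminf (fun t : ℝ => ((f t / t : ℝ) : EReal)) (𝓝[>] (0:ℝ)) < 0 := by
  have hβ : 0 < β := by linarith
  obtain rfl : f = rpowOsc α β fun x => a + Real.sin x := funext hf
  have hbound (x : ℝ) : |a + Real.sin x| ≤ a + 1 := by
    rw [abs_le]
    constructor <;> linarith [Real.neg_one_le_sin x, Real.sin_le_one x]
  have hF := EReal.tendsto_coe_nhds_top_iff.2 (tendsto_primitive_rpowOsc_div_sq hα0 hα1 hβ ha0)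
  refine ⟨(continuous_rpowOsc hα0 (by fun_prop) hbound).continuousOn, ?_, hF.limsup_eq,
    liminf_rpowOsc_div_lt_zero hα1 hβ ha1⟩
  rw [hF.liminf_eq]
  exact bot_lt_top
end
end

section
/- Let α, β, a be real numbers with α > 1, |α − β| < 1 and 0 < a < 1, and define f : [0,∞) → ℝ by f(t) = t^α (a + sin(t^β)). Then with F(t) = ∫₀^t f(τ) dτ one has: −∞ < liminf_{t→∞} F(t)/t², limsup_{t→∞} F(t)/t² = +∞, and liminf_{t→∞} f(t)/t < 0; that is, f satisfies condition (f_∞). -/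
open MeasureTheory Filter Topology ENNReal

noncomputable section

/-!
Writing `τ^α sin(τ^β) = τ^(α-β+1) · d/dτ (-cos(τ^β)/β)` and integrating by parts against the
increasing weight `τ^(α-β+1)` shows that the oscillating part of `F(t)` is `O(t^(α-β+1)) = o(t²)`,
while the rest is `a t^(α+1)/(α+1)` up to a constant. Hence `F(t)/t² → +∞`, which settles both
limits of `F(t)/t²`. Where `sin(t^β) = -1`, `f(t)/t = (a - 1) t^(α-1) ≤ a - 1 < 0`.
-/

open Set intervalIntegral

theorem abs_integral_mul_deriv_le_of_deriv_nonneg {u u' v v' : ℝ → ℝ} {a b M : ℝ} (hab : a ≤ b)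
    (hu : ∀ x ∈ Icc a b, HasDerivAt u (u' x) x) (hv : ∀ x ∈ Icc a b, HasDerivAt v (v' x) x)
    (hu'int : IntervalIntegrable u' volume a b) (hv'int : IntervalIntegrable v' volume a b)
    (hu'nonneg : ∀ x ∈ Icc a b, 0 ≤ u' x) (hua : 0 ≤ u a) (hvM : ∀ x ∈ Icc a b, |v x| ≤ M) :
    |∫ x in a..b, u x * v' x| ≤ 2 * M * u b := by
  rw [← uIcc_of_le hab] at hu hv
  have hincr : ∫ x in a..b, u' x = u b - u a := integral_eq_sub_of_hasDerivAt hu hu'int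
  have hub : 0 ≤ u b - u a := hincr ▸ integral_nonneg hab hu'nonneg
  have hrest : |∫ x in a..b, u' x * v x| ≤ M * (u b - u a) := by
    rw [← hincr, ← intervalIntegral.integral_const_mul, ← Real.norm_eq_abs]
    refine norm_integral_le_of_norm_le hab (ae_of_all _ fun x hx => ?_) (hu'int.const_mul M)
    have hx' := Ioc_subset_Icc_self hx
    rw [Real.norm_eq_abs, abs_mul, abs_of_nonneg (hu'nonneg x hx'), mul_comm]
    exact mul_le_mul_of_nonneg_right (hvM x hx') (hu'nonneg x hx')
  have hvb : |u b * v b| ≤ M * u b := by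
    rw [abs_mul, abs_of_nonneg (by linarith), mul_comm]
    exact mul_le_mul_of_nonneg_right (hvM b (right_mem_Icc.2 hab)) (by linarith)
  have hva : |u a * v a| ≤ M * u a := by
    rw [abs_mul, abs_of_nonneg hua, mul_comm]
    exact mul_le_mul_of_nonneg_right (hvM a (left_mem_Icc.2 hab)) hua
  rw [integral_mul_deriv_eq_deriv_mul hu hv hu'int hv'int]
  linarith [abs_sub (u b * v b - u a * v a) (∫ x in a..b, u' x * v x),
    abs_sub (u b * v b) (u a * v a)]

theorem abs_integral_rpow_mul_sin_rpow_le {α β t : ℝ} (hβ : 0 < β) (hγ : 0 < α - β + 1)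
    (ht : 1 ≤ t) :
    |∫ τ in (1 : ℝ)..t, τ ^ α * Real.sin (τ ^ β)| ≤ 2 / β * t ^ (α - β + 1) := by
  have hpos : ∀ x ∈ Icc 1 t, 0 < x := fun x hx => one_pos.trans_le hx.1
  have hsplit : ∀ x ∈ uIcc 1 t,
      x ^ α * Real.sin (x ^ β) = x ^ (α - β + 1) * (x ^ (β - 1) * Real.sin (x ^ β)) := by
    intro x hx
    rw [uIcc_of_le ht] at hx
    rw [← mul_assoc, ← Real.rpow_add (hpos x hx)]
    ring_nf
  have hv : ∀ x ∈ Icc 1 t,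
      HasDerivAt (fun x => -Real.cos (x ^ β) / β) (x ^ (β - 1) * Real.sin (x ^ β)) x := by
    intro x hx
    refine ((Real.hasDerivAt_rpow_const (p := β) (Or.inl (hpos x hx).ne')).cos.neg.div_const
      β).congr_deriv ?_
    field_simp
  rw [integral_congr hsplit]
  refine (abs_integral_mul_deriv_le_of_deriv_nonneg (M := 1 / β) ht
    (fun x hx => Real.hasDerivAt_rpow_const (Or.inl (hpos x hx).ne')) hv
    ((intervalIntegrable_rpow' (by linarith)).const_mul _)
    ((intervalIntegrable_rpow' (by linarith)).mul_continuousOn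
      (Real.continuous_sin.comp_continuousOn ?_))
    (fun x hx => by have := hpos x hx; positivity) (by positivity) fun x _ => ?_).trans_eq
    (by ring)
  · exact (Real.continuous_rpow_const hβ.le).continuousOn
  · rw [abs_div, abs_neg, abs_of_pos hβ]
    exact div_le_div_of_nonneg_right (Real.abs_cos_le_one _) hβ.le

theorem frequently_sin_eq_neg_one : ∃ᶠ s in atTop, Real.sin s = -1 := by
  have hs : Tendsto (fun k : ℕ => -(Real.pi / 2) + k * (2 * Real.pi)) atTop atTop :=
    tendsto_atTop_add_const_left _ _
      (tendsto_natCast_atTop_atTop.atTop_mul_const (by positivity))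
  exact hs.frequently (Frequently.of_forall fun k => Real.sin_eq_neg_one_iff.2 ⟨k, by simp⟩)

theorem frequently_sin_rpow_eq_neg_one {β : ℝ} (hβ : 0 < β) :
    ∃ᶠ t in atTop, Real.sin (t ^ β) = -1 :=
  (tendsto_rpow_atTop (inv_pos.2 hβ)).frequently <| frequently_sin_eq_neg_one.mp <|
    (eventually_gt_atTop 0).mono fun s hs h => by rwa [Real.rpow_inv_rpow hs.le hβ.ne']

def oscillatingRpow (α β a : ℝ) (t : ℝ) : ℝ :=
  if 0 < t then t ^ α * (a + Real.sin (t ^ β)) else 0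

section oscillatingRpow

variable {α β a : ℝ}

theorem oscillatingRpow_of_pos {t : ℝ} (ht : 0 < t) :
    oscillatingRpow α β a t = t ^ α * (a + Real.sin (t ^ β)) :=
  if_pos ht

theorem continuous_oscillatingRpow (hα : 0 < α) (hβ : 0 < β) :
    Continuous (oscillatingRpow α β a) := by
  have hmax : oscillatingRpow α β a =
      fun t => max t 0 ^ α * (a + Real.sin (max t 0 ^ β)) := by
    funext t
    rcases lt_or_ge 0 t with ht | ht
    · rw [oscillatingRpow_of_pos ht, max_eq_left ht.le]
    · rw [oscillatingRpow, if_neg ht.not_gt, max_eq_right ht, Real.zero_rpow hα.ne', zero_mul]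
  rw [hmax]
  fun_prop (disch := positivity)

theorem primitive_oscillatingRpow_eq (hα : 0 < α) (hβ : 0 < β) {t : ℝ} (ht : 1 ≤ t) :
    primitive (oscillatingRpow α β a) t = primitive (oscillatingRpow α β a) 1 +
      a * ((t ^ (α + 1) - 1) / (α + 1)) +
      ∫ τ in (1 : ℝ)..t, τ ^ α * Real.sin (τ ^ β) := by
  have hf := continuous_oscillatingRpow (a := a) hα hβ
  have hexpand : EqOn (oscillatingRpow α β a)
      (fun τ => a * τ ^ α + τ ^ α * Real.sin (τ ^ β)) (uIcc 1 t) := fun τ hτ => by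
    rw [uIcc_of_le ht] at hτ
    rw [oscillatingRpow_of_pos (one_pos.trans_le hτ.1)]
    ring
  rw [primitive, primitive, ← integral_add_adjacent_intervals (hf.intervalIntegrable 0 1)
    (hf.intervalIntegrable 1 t), integral_congr hexpand, intervalIntegral.integral_add,
    intervalIntegral.integral_const_mul, integral_rpow (Or.inl (by linarith)), Real.one_rpow,
    add_assoc]
  · exact (continuous_const.mul (Real.continuous_rpow_const hα.le)).intervalIntegrable _ _
  · exact ((Real.continuous_rpow_const hα.le).mul
      (Real.continuous_sin.comp (Real.continuous_rpow_const hβ.le))).intervalIntegrable _ _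

theorem tendsto_primitive_oscillatingRpow_div_sq (hα : 1 < α) (hαβ : |α - β| < 1)
    (ha : 0 < a) :
    Tendsto (fun t => primitive (oscillatingRpow α β a) t / t ^ 2) atTop atTop := by
  obtain ⟨hlo, hhi⟩ := abs_lt.1 hαβ
  have hβ : 0 < β := by linarith
  set A := a / (α + 1)
  set C := primitive (oscillatingRpow α β a) 1 - A
  have hlower : ∀ t ≥ 1, A * t ^ (α - 1) + (C * (t ^ 2)⁻¹ - 2 / β * t ^ (α - β - 1)) ≤
      primitive (oscillatingRpow α β a) t / t ^ 2 := by
    intro t ht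
    have ht0 : 0 < t := one_pos.trans_le ht
    have hosc :=
      (abs_le.1 (abs_integral_rpow_mul_sin_rpow_le (α := α) hβ (by linarith) ht)).1
    have hshift : ∀ r : ℝ, t ^ (r + 2) = t ^ r * t ^ 2 := fun r => by
      rw [Real.rpow_add ht0, Real.rpow_two]
    have hlhs : (A * t ^ (α - 1) + (C * (t ^ 2)⁻¹ - 2 / β * t ^ (α - β - 1))) * t ^ 2 =
        C + A * t ^ (α + 1) - 2 / β * t ^ (α - β + 1) := by
      rw [show α + 1 = α - 1 + 2 by ring, show α - β + 1 = α - β - 1 + 2 by ring, hshift,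
        hshift]
      field_simp
      ring
    have hpoly : a * ((t ^ (α + 1) - 1) / (α + 1)) = A * t ^ (α + 1) - A := by ring
    rw [le_div_iff₀ (by positivity), hlhs, primitive_oscillatingRpow_eq (by linarith) hβ ht]
    linarith
  have hA : Tendsto (fun t : ℝ => A * t ^ (α - 1)) atTop atTop :=
    (tendsto_rpow_atTop (by linarith)).const_mul_atTop (by positivity)
  have hrest : Tendsto (fun t : ℝ => C * (t ^ 2)⁻¹ - 2 / β * t ^ (α - β - 1)) atTop
      (𝓝 (C * 0 - 2 / β * 0)) := by
    refine ((tendsto_inv_atTop_zero.comp (tendsto_pow_atTop two_ne_zero)).const_mul C).sub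
      (Tendsto.const_mul _ ?_)
    rw [show α - β - 1 = -(1 + β - α) by ring]
    exact tendsto_rpow_neg_atTop (by linarith)
  exact tendsto_atTop_mono' _ ((eventually_ge_atTop 1).mono hlower) (hA.atTop_add hrest)

theorem frequently_oscillatingRpow_div_le (hα : 1 ≤ α) (hβ : 0 < β) (ha : a < 1) :
    ∃ᶠ t in atTop, oscillatingRpow α β a t / t ≤ a - 1 := by
  refine (frequently_sin_rpow_eq_neg_one hβ).mp
    ((eventually_ge_atTop 1).mono fun t ht hsin => ?_)
  have ht0 : 0 < t := one_pos.trans_le ht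
  have hgrow : t ≤ t ^ α := by
    simpa using Real.rpow_le_rpow_of_exponent_le ht hα
  rw [oscillatingRpow_of_pos ht0, hsin, div_le_iff₀ ht0]
  nlinarith

end oscillatingRpow

/-- Remark 1.2(2): `f(t) = t^α (a + sin(t^β))` satisfies `(f_∞)`. -/
theorem statement16
    (α β a : ℝ) (hα : 1 < α) (hαβ : |α - β| < 1) (ha0 : 0 < a) (ha1 : a < 1)
    (f : ℝ → ℝ)
    (hf : ∀ t : ℝ, f t = if 0 < t then t ^ α * (a + Real.sin (t ^ β)) else 0) :
    (⊥ : EReal) <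
      liminf (fun t : ℝ => ((primitive f t / t ^ 2 : ℝ) : EReal)) atTop ∧
    limsup (fun t : ℝ => ((primitive f t / t ^ 2 : ℝ) : EReal)) atTop = ⊤ ∧
    liminf (fun t : ℝ => ((f t / t : ℝ) : EReal)) atTop < 0 := by
  obtain rfl : f = oscillatingRpow α β a := funext hf
  have hβ : 0 < β := by linarith [(abs_lt.1 hαβ).2]
  have hF : Tendsto (fun t => ((primitive (oscillatingRpow α β a) t / t ^ 2 : ℝ) : EReal)) atTop
      (𝓝 ⊤) :=
    EReal.tendsto_coe_nhds_top_iff.2 (tendsto_primitive_oscillatingRpow_div_sq hα hαβ ha0)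
  refine ⟨hF.liminf_eq ▸ bot_lt_top, hF.limsup_eq, ?_⟩
  calc liminf (fun t : ℝ => ((oscillatingRpow α β a t / t : ℝ) : EReal)) atTop
      ≤ ((a - 1 : ℝ) : EReal) :=
        liminf_le_of_frequently_le' ((frequently_oscillatingRpow_div_le hα.le hβ ha1).mono
          fun t ht => EReal.coe_le_coe_iff.2 ht)
    _ < 0 := by exact_mod_cast (by linarith : a - 1 < 0)
end
end
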